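/- If p is a prime with p ≡ ±1 (mod 4) (i.e., p odd), n is a positive multiple of 3, and m = (2np)^2 + 3 is square-free, then the class number of Q(√m) is greater than 1. -/

import Mathlib

/-!
Since `m ≡ 3 (mod 4)` is squarefree, the ring of integers of `ℚ(√m)` is `ℤ[√m]`. Writing
`m = 9s² + 3` with `s = 2(n/3)p > 0`, no element of `ℤ[√m]` has norm `±2`: norm `2` is impossible
modulo `3`, and from a solution of `a² - m b² = -2` multiplication by the conjugate of the unit
`(6s² + 1) + 2s√m` produces one with smaller `|b|`. Hence `2` is irreducible in `ℤ[√m]`, but it is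
not prime, since it divides `(1 + √m)(-1 + √m) = m - 1` and neither factor. So `ℤ[√m]` is not a
principal ideal domain and the class number exceeds `1`.
-/

open IntermediateField NumberField Polynomial

theorem Int.sq_sub_mul_sq_ne_two {d : ℤ} (h3 : 3 ∣ d) (a b : ℤ) : a ^ 2 - d * b ^ 2 ≠ 2 := by
  intro h
  have h' := congrArg (Int.cast : ℤ → ZMod 3) h
  simp only [Int.cast_sub, Int.cast_mul, Int.cast_pow, Int.cast_ofNat,
    (ZMod.intCast_zmod_eq_zero_iff_dvd d 3).2 h3, zero_mul, sub_zero] at h'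
  generalize (a : ZMod 3) = x at h'
  revert x; decide

theorem Int.sq_sub_mul_sq_ne_neg_two {d u v : ℤ} (hv : 0 ≤ v) (hpell : u ^ 2 - d * v ^ 2 = 1)
    (hsmall : v ^ 2 < u - 1) (a b : ℤ) : a ^ 2 - d * b ^ 2 ≠ -2 := by
  induction hn : b.natAbs using Nat.strong_induction_on generalizing a b with
  | _ n ih =>
    intro h
    wlog hab : 0 ≤ a ∧ 0 ≤ b generalizing a b
    · exact this |a| |b| (by rwa [Int.natAbs_abs]) (by rwa [sq_abs, sq_abs])
        ⟨abs_nonneg a, abs_nonneg b⟩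
    obtain ⟨ha, hb⟩ := hab
    have hb1 : 1 ≤ b := by
      rcases hb.lt_or_eq with hb | rfl
      · exact hb
      · nlinarith [sq_nonneg a]
    have hu : 1 ≤ u := by nlinarith
    -- `(a + b√d)(u - v√d)` is a solution whose `√d`-coordinate `u b - v a` lies in `[1, b)`.
    have hlt : v * a < u * b := by
      nlinarith [mul_nonneg hv ha, mul_nonneg (by omega : (0 : ℤ) ≤ u) hb]
    have hgt : u * b - b < v * a := by
      nlinarith [mul_nonneg hv ha, mul_nonneg (by omega : (0 : ℤ) ≤ u - 1) hb]
    refine ih (u * b - v * a).natAbs (by omega) (u * a - d * v * b) _ rfl ?_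
    linear_combination (a ^ 2 - d * b ^ 2) * hpell + h

theorem Int.even_and_even_of_sq_sub_mul_sq_eq {d a b c : ℤ} (hd : d % 4 = 3)
    (h : a ^ 2 - d * b ^ 2 = 4 * c) : Even a ∧ Even b := by
  obtain ⟨t, rfl⟩ : ∃ t, d = 4 * t + 3 := ⟨d / 4, by omega⟩
  rcases Int.even_or_odd' a with ⟨j, rfl | rfl⟩ <;>
    rcases Int.even_or_odd' b with ⟨k, rfl | rfl⟩
  · exact ⟨even_two_mul j, even_two_mul k⟩
  all_goals exfalso
  · have : 4 * (j ^ 2 - 4 * t * k ^ 2 - 3 * k ^ 2 - t * (4 * k + 1) - 3 * k - c) = 3 := by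
      linear_combination h
    omega
  · have : 4 * (j ^ 2 + j - 4 * t * k ^ 2 - 3 * k ^ 2 - c) = -1 := by
      linear_combination h
    omega
  · have : 4 * (j ^ 2 + j - 4 * t * (k ^ 2 + k) - t - 3 * (k ^ 2 + k) - c) = 2 := by
      linear_combination h
    omega

theorem Rat.exists_int_eq_of_squarefree_mul_sq {d : ℤ} (hd : Squarefree d) {q : ℚ} {z : ℤ}
    (h : (z : ℚ) = d * q ^ 2) : ∃ w : ℤ, (w : ℚ) = q := by
  have key : z * (q.den : ℤ) ^ 2 = d * q.num ^ 2 := by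
    have : (z : ℚ) * (q.den : ℚ) ^ 2 = d * (q.num : ℚ) ^ 2 := by
      rw [h, ← Rat.mul_den_eq_num]; ring
    exact_mod_cast this
  have hcop : IsCoprime (q.den : ℤ) q.num := by
    rw [Int.isCoprime_iff_gcd_eq_one]
    simpa [Int.gcd, Nat.coprime_comm] using q.reduced
  have hdvd : (q.den : ℤ) * q.den ∣ d :=
    sq (q.den : ℤ) ▸ hcop.pow.dvd_of_dvd_mul_right ⟨z, by rw [← key]; ring⟩
  have hone : q.den = 1 := by
    simpa using Int.isUnit_iff_natAbs_eq.mp (hd _ hdvd)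
  exact ⟨q.num, Rat.coe_int_num_of_den_eq_one hone⟩

namespace Zsqrtd

variable {d : ℤ}

theorem norm_ne_two_and_ne_neg_two {s : ℤ} (hd : d = 9 * s ^ 2 + 3) (hs : 0 < s) (z : ℤ√d) :
    z.norm ≠ 2 ∧ z.norm ≠ -2 := by
  have hre_im : z.norm = z.re ^ 2 - d * z.im ^ 2 := by rw [norm_def]; ring
  rw [hre_im]
  exact ⟨Int.sq_sub_mul_sq_ne_two ⟨3 * s ^ 2 + 1, by rw [hd]; ring⟩ _ _,
    Int.sq_sub_mul_sq_ne_neg_two (u := 6 * s ^ 2 + 1) (v := 2 * s) (by omega)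
      (by rw [hd]; ring) (by nlinarith) _ _⟩

theorem irreducible_two (hd : ∀ z : ℤ√d, z.norm ≠ 2 ∧ z.norm ≠ -2) : Irreducible (2 : ℤ√d) := by
  have hnorm_two : (2 : ℤ√d).norm.natAbs = 4 := by simp [norm_def]
  refine ⟨fun h => ?_, fun x y hxy => ?_⟩
  · have := norm_eq_one_iff.mpr h
    omega
  · have hprod : x.norm.natAbs * y.norm.natAbs = 4 := by
      rw [← Int.natAbs_mul, ← norm_mul, ← hxy, hnorm_two]
    have hx2 : x.norm.natAbs ≠ 2 := fun h2 => by
      rcases Int.natAbs_eq_iff.mp h2 with h | h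
      · exact (hd x).1 h
      · exact (hd x).2 h
    have : x.norm.natAbs = 1 ∨ y.norm.natAbs = 1 := by
      have hle : x.norm.natAbs ∣ 4 := ⟨_, hprod.symm⟩
      have : x.norm.natAbs ≤ 4 := Nat.le_of_dvd (by norm_num) hle
      interval_cases h : x.norm.natAbs <;> omega
    exact this.imp norm_eq_one_iff.mp norm_eq_one_iff.mp

theorem not_prime_two (hd : Odd d) : ¬Prime (2 : ℤ√d) := by
  intro h
  obtain ⟨k, hk⟩ := hd
  have hfac : (2 : ℤ√d) ∣ ⟨1, 1⟩ * ⟨-1, 1⟩ :=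
    ⟨k, by ext <;> simp [hk]⟩
  have h2 : ∀ r : ℤ, ((2 : ℤ) : ℤ√d) ∣ ⟨r, 1⟩ → False := fun r hr =>
    absurd ((intCast_dvd 2 _).mp hr).2 (by norm_num)
  rcases h.dvd_or_dvd hfac with h1 | h1
  · exact h2 1 (by exact_mod_cast h1)
  · exact h2 (-1) (by exact_mod_cast h1)

end Zsqrtd

section QuadraticField

variable {M : ℕ}

theorem isIntegral_sqrt_natCast (R : Type*) [CommRing R] [Algebra R ℝ] (M : ℕ) :
    IsIntegral R √(M : ℝ) :=
  IsIntegral.of_pow two_pos (by rw [Real.sq_sqrt M.cast_nonneg]; exact isIntegral_natCast M)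

theorem exists_rat_eq_add_mul_sqrt_of_mem {x : ℝ} (hx : x ∈ ℚ⟮√(M : ℝ)⟯) :
    ∃ a b : ℚ, x = a + b * √(M : ℝ) := by
  rw [← mem_toSubalgebra,
    adjoin_simple_toSubalgebra_of_isAlgebraic (isIntegral_sqrt_natCast ℚ M).isAlgebraic] at hx
  induction hx using Algebra.adjoin_induction with
  | mem x hx => exact ⟨0, 1, by simp_all⟩
  | algebraMap r => exact ⟨r, 0, by simp⟩
  | add x y _ _ hx hy =>
    obtain ⟨a, b, rfl⟩ := hx
    obtain ⟨c, e, rfl⟩ := hy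
    exact ⟨a + c, b + e, by push_cast; ring⟩
  | mul x y _ _ hx hy =>
    obtain ⟨a, b, rfl⟩ := hx
    obtain ⟨c, e, rfl⟩ := hy
    refine ⟨a * c + M * b * e, a * e + b * c, ?_⟩
    push_cast
    linear_combination (b * e : ℝ) * Real.sq_sqrt M.cast_nonneg

theorem irrational_sqrt_natCast_of_squarefree (hsf : Squarefree M) (hM : M ≠ 1) :
    Irrational √(M : ℝ) := by
  rw [irrational_sqrt_natCast_iff]
  rintro ⟨r, rfl⟩
  exact hM (by simpa using hsf r ⟨1, by ring⟩)

theorem minpoly_add_mul_sqrt (hM : Irrational √(M : ℝ)) {a b : ℚ} (hb : b ≠ 0) :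
    minpoly ℚ ((a : ℝ) + b * √(M : ℝ)) = X ^ 2 - C (2 * a) * X + C (a ^ 2 - M * b ^ 2) := by
  set y : ℝ := a + b * √(M : ℝ)
  set q : ℚ[X] := X ^ 2 - C (2 * a) * X + C (a ^ 2 - M * b ^ 2) with hq_def
  have hq : q.Monic := by rw [hq_def]; monicity!
  have hqdeg : q.natDegree = 2 := by rw [hq_def]; compute_degree!
  have hroot : aeval y q = 0 := by
    simp only [q, y, map_add, map_sub, map_pow, map_mul, aeval_X, aeval_C, eq_ratCast]
    push_cast
    linear_combination (b ^ 2 : ℝ) * Real.sq_sqrt M.cast_nonneg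
  have hint : IsIntegral ℚ y := ⟨q, hq, hroot⟩
  have hirr : Irrational y := (hM.ratCast_mul hb).ratCast_add a
  refine (eq_of_monic_of_dvd_of_natDegree_le (minpoly.monic hint) hq
    (minpoly.dvd ℚ y hroot) ?_).symm
  rw [hqdeg, minpoly.two_le_natDegree_iff hint]
  rintro ⟨r, hr⟩
  exact hirr ⟨r, hr⟩

theorem exists_int_eq_of_isIntegral_add_mul_sqrt (hsf : Squarefree M) (hM : M % 4 = 3) {a b : ℚ}
    (h : IsIntegral ℤ ((a : ℝ) + b * √(M : ℝ))) : ∃ A B : ℤ, a = A ∧ b = B := by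
  by_cases hb : b = 0
  · subst hb
    rw [Rat.cast_zero, zero_mul, add_zero, ← eq_ratCast (algebraMap ℚ ℝ),
      isIntegral_algebraMap_iff (algebraMap ℚ ℝ).injective,
      IsIntegrallyClosed.isIntegral_iff] at h
    obtain ⟨A, hA⟩ := h
    exact ⟨A, 0, by simp [← hA]⟩
  have hcoeff (i : ℕ) :
      ∃ z : ℤ, (z : ℚ) = (X ^ 2 - C (2 * a) * X + C (a ^ 2 - M * b ^ 2)).coeff i := by
    rw [← minpoly_add_mul_sqrt (irrational_sqrt_natCast_of_squarefree hsf (by omega)) hb,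
      minpoly.isIntegrallyClosed_eq_field_fractions' ℚ h]
    exact ⟨_, by rw [coeff_map, eq_intCast]⟩
  obtain ⟨T, hT⟩ := hcoeff 1
  obtain ⟨N, hN⟩ := hcoeff 0
  replace hT : (T : ℚ) = -(2 * a) := by simpa [coeff_X, coeff_C, -map_pow, -map_mul] using hT
  replace hN : (N : ℚ) = a ^ 2 - M * b ^ 2 := by simpa [coeff_C, -map_pow, -map_mul] using hN
  obtain ⟨B₂, hB₂⟩ := Rat.exists_int_eq_of_squarefree_mul_sq (Int.squarefree_natCast.mpr hsf)
    (q := 2 * b) (z := T ^ 2 - 4 * N) (by push_cast; rw [hT, hN]; ring)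
  have hnorm : T ^ 2 - M * B₂ ^ 2 = 4 * N := by
    have : ((T ^ 2 - M * B₂ ^ 2 : ℤ) : ℚ) = (4 * N : ℤ) := by push_cast; rw [hT, hN, hB₂]; ring
    exact_mod_cast this
  obtain ⟨⟨A, hA⟩, ⟨B, hB⟩⟩ := Int.even_and_even_of_sq_sub_mul_sq_eq (by omega) hnorm
  refine ⟨-A, B, ?_, ?_⟩
  · have : ((T : ℤ) : ℚ) = A + A := by rw [hA]; push_cast; ring
    push_cast; linarith
  · have : ((B₂ : ℤ) : ℚ) = B + B := by rw [hB]; push_cast; ring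
    linarith

variable (M) in
noncomputable def sqrtInRingOfIntegers : 𝓞 ℚ⟮√(M : ℝ)⟯ :=
  ⟨AdjoinSimple.gen ℚ √(M : ℝ),
    (isIntegral_algebraMap_iff (algebraMap ℚ⟮√(M : ℝ)⟯ ℝ).injective).mp
      (by rw [AdjoinSimple.algebraMap_gen]; exact isIntegral_sqrt_natCast ℤ M)⟩

@[simp]
theorem coe_sqrtInRingOfIntegers : ((sqrtInRingOfIntegers M : ℚ⟮√(M : ℝ)⟯) : ℝ) = √(M : ℝ) := rfl

theorem IntermediateField.ringOfIntegers_coe_injective {K : IntermediateField ℚ ℝ} :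
    Function.Injective (fun x : 𝓞 K => ((x : K) : ℝ)) :=
  Subtype.val_injective.comp RingOfIntegers.coe_injective

variable (M) in
noncomputable def zsqrtdToRingOfIntegers : ℤ√(M : ℤ) →+* 𝓞 ℚ⟮√(M : ℝ)⟯ :=
  Zsqrtd.lift ⟨sqrtInRingOfIntegers M, ringOfIntegers_coe_injective <| by
    simp [Real.mul_self_sqrt M.cast_nonneg]⟩

theorem coe_zsqrtdToRingOfIntegers (z : ℤ√(M : ℤ)) :
    ((zsqrtdToRingOfIntegers M z : ℚ⟮√(M : ℝ)⟯) : ℝ) = z.re + z.im * √(M : ℝ) := by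
  simp [zsqrtdToRingOfIntegers]

theorem zsqrtdToRingOfIntegers_injective (hsf : Squarefree M) (hM : M % 4 = 3) :
    Function.Injective (zsqrtdToRingOfIntegers M) := by
  refine Zsqrtd.lift_injective _ fun n hn => ?_
  have := (Int.squarefree_natCast.mpr hsf) n ⟨1, by rw [hn, mul_one]⟩
  rw [Int.isUnit_iff] at this
  rcases this with rfl | rfl <;> omega

theorem zsqrtdToRingOfIntegers_surjective (hsf : Squarefree M) (hM : M % 4 = 3) :
    Function.Surjective (zsqrtdToRingOfIntegers M) := by
  intro x
  obtain ⟨a, b, hab⟩ := exists_rat_eq_add_mul_sqrt_of_mem (x : ℚ⟮√(M : ℝ)⟯).2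
  have hint : IsIntegral ℤ ((a : ℝ) + b * √(M : ℝ)) := by
    rw [← hab]
    exact x.isIntegral_coe.map (IsScalarTower.toAlgHom ℤ ℚ⟮√(M : ℝ)⟯ ℝ)
  obtain ⟨A, B, rfl, rfl⟩ := exists_int_eq_of_isIntegral_add_mul_sqrt hsf hM hint
  refine ⟨⟨A, B⟩, ringOfIntegers_coe_injective ?_⟩
  simp only [coe_zsqrtdToRingOfIntegers, hab, Rat.cast_intCast]

noncomputable def zsqrtdEquivRingOfIntegers (hsf : Squarefree M) (hM : M % 4 = 3) :
    ℤ√(M : ℤ) ≃+* 𝓞 ℚ⟮√(M : ℝ)⟯ :=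
  RingEquiv.ofBijective _ ⟨zsqrtdToRingOfIntegers_injective hsf hM,
    zsqrtdToRingOfIntegers_surjective hsf hM⟩

theorem one_lt_classNumber_of_norm_ne_two (hsf : Squarefree M) (hM : M % 4 = 3)
    [NumberField ℚ⟮√(M : ℝ)⟯] (hnorm : ∀ z : ℤ√(M : ℤ), z.norm ≠ 2 ∧ z.norm ≠ -2) :
    1 < classNumber ℚ⟮√(M : ℝ)⟯ := by
  refine lt_of_le_of_ne (classNumber_pos _) fun h => ?_
  have : IsPrincipalIdealRing (𝓞 ℚ⟮√(M : ℝ)⟯) := classNumber_eq_one_iff.mp h.symm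
  set e := zsqrtdEquivRingOfIntegers hsf hM
  have hprime : Prime (e 2) := UniqueFactorizationMonoid.irreducible_iff_prime.mp
    ((MulEquiv.irreducible_iff e).mpr (Zsqrtd.irreducible_two hnorm))
  exact Zsqrtd.not_prime_two (Int.odd_iff.mpr (by omega)) ((MulEquiv.prime_iff e).mp hprime)

end QuadraticField

theorem stmt_11_general (p n : ℕ) (hp : p.Prime)
    (hn : 1 ≤ n) (h3 : 3 ∣ n)
    (m : ℕ) (hm : m = (2 * n * p) ^ 2 + 3) (hsf : Squarefree m)
    (K : IntermediateField ℚ ℝ) (hK : K = ℚ⟮Real.sqrt m⟯) [NumberField K] :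
    1 < NumberField.classNumber K := by
  subst hK
  obtain ⟨j, rfl⟩ := h3
  have hs : 0 < (2 * j * p : ℤ) := by
    have := hp.pos
    have : 0 < j := by omega
    positivity
  refine one_lt_classNumber_of_norm_ne_two hsf (by rw [hm]; ring_nf; omega)
    (Zsqrtd.norm_ne_two_and_ne_neg_two (by rw [hm]; push_cast; ring) hs)

theorem stmt_11 (p n : ℕ) (hp : p.Prime) (hp4 : p % 4 = 1 ∨ p % 4 = 3)
    (hn : 1 ≤ n) (h3 : 3 ∣ n)
    (m : ℕ) (hm : m = (2 * n * p) ^ 2 + 3) (hsf : Squarefree m)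
    (K : IntermediateField ℚ ℝ) (hK : K = ℚ⟮Real.sqrt m⟯) [NumberField K] :
    1 < NumberField.classNumber K :=
  stmt_11_general p n hp hn h3 m hm hsf K hK
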